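/- Let n > 4, let k be a divisor of n with 1 < k and 2k ≤ n, set m = n/k, and let p be a prime. Suppose g ∈ Sym(n) has order p and is quasi-semiregular in the action of Sym(n) on the set of partitions of {1,…,n} into m parts of size k. Then p is odd, k = p, m ≤ p, g is an even permutation, g fixes setwise each part of the unique partition it fixes, and either g has exactly p fixed points and m − 1 orbits of length p on {1,…,n} (cycle type 1^p p^{m−1}), or m < p and g has no fixed points and m orbits of length p on {1,…,n} (cycle type p^m). -/

import Mathlib

/-!
If `σ⁻¹ * g * σ` stabilises the unique `g`-fixed partition `Q`, then `g` fixes `σ • Q`, so `σ`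
stabilises `Q` too; hence such a `σ` cannot fix a point of a part `A` and move another point of
`A` out of `A`. Three choices of `σ` turn this into constraints on `g`: the cycle of `g` through
a point (it commutes with `g`, so `g` fixes every part); a permutation exchanging two
`g`-invariant sets of equal size lying in different parts (so the fixed points of `g` make up at
most one part, and every other part is a single `p`-cycle of `g`, whence `k = p`); and the
transposition of the `p × p` grid formed by `p` parts moved by `g` (so fewer than `p` parts are
moved). Counting then gives the cycle type, and a permutation of odd order is even.
-/

/-- `P` is a partition of `{1,…,n}` (here `Fin n`) into parts of size `k`:
every member of `P` has `k` elements and every point lies in exactly one member of `P`. -/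
def IsSizedPartition (n k : ℕ) (P : Finset (Finset (Fin n))) : Prop :=
  (∀ A ∈ P, A.card = k) ∧ ∀ a : Fin n, ∃! A : Finset (Fin n), A ∈ P ∧ a ∈ A

open Equiv Equiv.Perm Finset Function Pointwise

theorem Subgroup.mem_of_zpow_mem {G : Type*} [Group G] {H : Subgroup G} {g : G} {i : ℤ}
    (hg : (orderOf g).Prime) (hi : g ^ i ∈ H) (hne : g ^ i ≠ 1) : g ∈ H := by
  refine Subgroup.zpowers_le.2 hi (mem_zpowers_zpow_iff.2 ?_)
  have hdvd : ¬ orderOf g ∣ i.natAbs := by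
    rwa [← Int.natCast_dvd, orderOf_dvd_iff_zpow_eq_one]
  exact Nat.Coprime.symm ((Nat.Prime.coprime_iff_not_dvd hg).2 hdvd)

theorem Finset.smul_finset_eq_self_of_forall_smul_mem {G β : Type*} [Group G] [MulAction G β]
    [DecidableEq β] {a : G} {s : Finset β} (h : ∀ x ∈ s, a • x ∈ s) : a • s = s :=
  eq_of_subset_of_card_le
    (fun y hy => by obtain ⟨x, hx, rfl⟩ := mem_smul_finset.1 hy; exact h x hx)
    (card_smul_finset a s).ge

namespace Equiv.Perm

variable {α : Type*}

theorem exists_involutive_extend {β : Type*} {φ : β → α} (hφ : Injective φ) {τ : β → β}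
    (hτ : Involutive τ) :
    ∃ σ : Perm α, σ⁻¹ = σ ∧ (∀ b, σ (φ b) = φ (τ b)) ∧ ∀ x ∉ Set.range φ, σ x = x := by
  classical
  let f := Equiv.ofInjective φ hφ
  refine ⟨(hτ.toPerm τ).extendDomain f, ?_, fun b => extendDomain_apply_image _ f b,
    fun x hx => extendDomain_apply_not_subtype _ f hx⟩
  rw [extendDomain_inv, Perm.inv_def, Involutive.toPerm_symm]

theorem exists_involutive_swap {S T : Finset α} (hST : _root_.Disjoint S T) (hcard : #S = #T) :
    ∃ σ : Perm α, σ⁻¹ = σ ∧ (∀ x ∈ S, σ x ∈ T) ∧ (∀ x ∈ T, σ x ∈ S) ∧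
      ∀ x, x ∉ S → x ∉ T → σ x = x := by
  let e : S ≃ T := equivOfCardEq hcard
  have hφ : Injective (Sum.elim ((↑) : S → α) ((↑) : T → α)) :=
    Subtype.val_injective.sumElim Subtype.val_injective
      fun s t h => disjoint_left.1 hST s.2 (h ▸ t.2)
  obtain ⟨σ, hinv, hσ, hfix⟩ := exists_involutive_extend hφ
    (τ := Sum.elim (Sum.inr ∘ e) (Sum.inl ∘ e.symm)) (by rintro (s | t) <;> simp)
  refine ⟨σ, hinv, fun x hx => ?_, fun x hx => ?_, fun x hS hT => hfix x ?_⟩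
  · simpa using hσ (.inl ⟨x, hx⟩) ▸ (e ⟨x, hx⟩).2
  · simpa using hσ (.inr ⟨x, hx⟩) ▸ (e.symm ⟨x, hx⟩).2
  · rintro ⟨s | t, rfl⟩
    exacts [hS s.2, hT t.2]

variable [DecidableEq α] {g : Perm α}

theorem apply_mem_iff_of_smul_finset_eq {s : Finset α} (h : g • s = s) {x : α} :
    g x ∈ s ↔ x ∈ s := by
  conv_lhs => rw [← h]
  exact smul_mem_smul_finset_iff g

theorem mem_alternatingGroup_of_odd_orderOf [Fintype α] (h : Odd (orderOf g)) :
    g ∈ alternatingGroup α := by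
  have := congrArg sign (pow_orderOf_eq_one g)
  rwa [map_pow, map_one, Int.units_pow_eq_pow_mod_two, Nat.odd_iff.1 h, pow_one] at this

variable [Fintype α] {x : α}

theorem card_support_cycleOf_of_prime (hg : (orderOf g).Prime) (hx : g x ≠ x) :
    #(g.cycleOf x).support = orderOf g := by
  rw [← (isCycle_cycleOf g hx).orderOf]
  refine (hg.eq_one_or_self_of_dvd _ (orderOf_cycleOf_dvd_orderOf g x)).resolve_left ?_
  rwa [orderOf_eq_one_iff, cycleOf_eq_one_iff]

theorem smul_support_cycleOf (g : Perm α) (x : α) :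
    g • (g.cycleOf x).support = (g.cycleOf x).support :=
  smul_finset_eq_self_of_forall_smul_mem fun _ hy =>
    (isCycleOn_support_cycleOf g x).apply_mem_iff.2 hy

theorem support_cycleOf_subset {s : Finset α} (hs : g • s = s) (hx : x ∈ s) :
    (g.cycleOf x).support ⊆ s := by
  intro y hy
  obtain ⟨i, rfl⟩ := (mem_support_cycleOf_iff.1 hy).1
  have : (g ^ i) • s = s := Subgroup.zpow_mem (MulAction.stabilizer (Perm α) s) hs i
  exact (apply_mem_iff_of_smul_finset_eq this).2 hx

theorem exists_subset_smul_eq_card_eq (hg : (orderOf g).Prime) {s : Finset α} (hs : g • s = s)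
    (hcard : orderOf g ≤ #s) : ∃ t ⊆ s, g • t = t ∧ #t = orderOf g := by
  by_cases h : ∀ x ∈ s, g x = x
  · obtain ⟨t, hts, ht⟩ := exists_subset_card_eq hcard
    refine ⟨t, hts, smul_finset_eq_self_of_forall_smul_mem fun y hy => ?_, ht⟩
    rw [Perm.smul_def, h y (hts hy)]
    exact hy
  · obtain ⟨x, hx, hgx⟩ : ∃ x ∈ s, g x ≠ x := by simpa using h
    exact ⟨_, support_cycleOf_subset hs hx, smul_support_cycleOf g x,
      card_support_cycleOf_of_prime hg hgx⟩

theorem cycleType_eq_replicate_of_card_fixedPoints (hg : (orderOf g).Prime) {c : ℕ}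
    (h : #(univ.filter fun x => g x = x) + c * orderOf g = Fintype.card α) :
    g.cycleType = Multiset.replicate c (orderOf g) := by
  obtain ⟨t, ht⟩ := cycleType_prime_order hg
  have hcard : #(univ.filter fun x => g x = x) + #g.support = Fintype.card α :=
    card_filter_add_card_filter_not _
  have hsum := sum_cycleType g
  rw [ht, Multiset.sum_replicate, smul_eq_mul] at hsum
  rw [ht, Nat.eq_of_mul_eq_mul_right hg.pos (show (t + 1) * orderOf g = c * orderOf g by omega)]

end Equiv.Perm

namespace IsSizedPartition

variable {n k : ℕ} {P : Finset (Finset (Fin n))}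

theorem eq_of_mem_of_mem (hP : IsSizedPartition n k P) {A B : Finset (Fin n)} {a : Fin n}
    (hA : A ∈ P) (hB : B ∈ P) (haA : a ∈ A) (haB : a ∈ B) : A = B :=
  (hP.2 a).unique ⟨hA, haA⟩ ⟨hB, haB⟩

theorem nonempty_of_mem (hP : IsSizedPartition n k P) (hk : 0 < k) {A : Finset (Fin n)}
    (hA : A ∈ P) : A.Nonempty :=
  card_pos.1 (hP.1 A hA ▸ hk)

theorem smul (hP : IsSizedPartition n k P) (σ : Perm (Fin n)) :
    IsSizedPartition n k (σ • P) := by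
  refine ⟨fun A hA => ?_, fun a => ?_⟩
  · obtain ⟨B, hB, rfl⟩ := mem_smul_finset.1 hA
    rw [card_smul_finset, hP.1 B hB]
  · obtain ⟨B, ⟨hB, haB⟩, -⟩ := hP.2 (σ⁻¹ • a)
    refine ⟨σ • B, ⟨smul_mem_smul_finset hB, by rwa [← inv_smul_mem_iff]⟩, ?_⟩
    rintro _ ⟨hC, haC⟩
    obtain ⟨C, hC', rfl⟩ := mem_smul_finset.1 hC
    rw [hP.eq_of_mem_of_mem hC' hB (inv_smul_mem_iff.2 haC) haB]

theorem card_mul_eq (hP : IsSizedPartition n k P) : #P * k = n := by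
  have hunion : P.biUnion id = univ := eq_univ_of_forall fun a => by
    obtain ⟨A, ⟨hA, ha⟩, -⟩ := hP.2 a
    exact mem_biUnion.2 ⟨A, hA, ha⟩
  calc #P * k = ∑ A ∈ P, #A := by rw [sum_congr rfl hP.1, sum_const, smul_eq_mul]
    _ = #(P.biUnion id) := (card_biUnion fun A hA B hB hAB => disjoint_left.2
          fun _ haA haB => hAB (hP.eq_of_mem_of_mem hA hB haA haB)).symm
    _ = n := by rw [hunion, card_univ, Fintype.card_fin]

theorem one_lt_card (hP : IsSizedPartition n k P) (hk : 0 < k) (h : 2 * k ≤ n) : 1 < #P :=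
  Nat.lt_of_mul_lt_mul_right (a := k) (by rw [hP.card_mul_eq]; omega)

end IsSizedPartition

/-- `g • P` is the pointwise action, definitionally `P.image fun A => A.image g`. -/
def IsUniqueFixedPartition (n k : ℕ) (g : Perm (Fin n)) (Q : Finset (Finset (Fin n))) : Prop :=
  IsSizedPartition n k Q ∧ ∀ P, IsSizedPartition n k P → (g • P = P ↔ P = Q)

namespace IsUniqueFixedPartition

variable {n k : ℕ} {g σ : Perm (Fin n)} {Q : Finset (Finset (Fin n))} {A B : Finset (Fin n)}

theorem zpow_smul_mem (hQ : IsUniqueFixedPartition n k g Q) (i : ℤ) (hA : A ∈ Q) :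
    (g ^ i) • A ∈ Q := by
  have : (g ^ i) • Q = Q :=
    Subgroup.zpow_mem (MulAction.stabilizer (Perm (Fin n)) Q) ((hQ.2 Q hQ.1).2 rfl) i
  exact this ▸ smul_mem_smul_finset hA

theorem smul_mem (hQ : IsUniqueFixedPartition n k g Q) (hA : A ∈ Q) : g • A ∈ Q := by
  simpa using hQ.zpow_smul_mem 1 hA

theorem smul_eq_of_conj (hQ : IsUniqueFixedPartition n k g Q)
    (hσ : (σ⁻¹ * g * σ) • Q = Q) : σ • Q = Q := by
  refine (hQ.2 _ (hQ.1.smul σ)).1 ?_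
  calc g • σ • Q = σ • (σ⁻¹ * g * σ) • Q := by
        simp only [smul_smul, ← mul_assoc, mul_inv_cancel, one_mul]
    _ = σ • Q := by rw [hσ]

theorem eq_of_conj (hQ : IsUniqueFixedPartition n k g Q)
    (hσ : ∀ C ∈ Q, (σ⁻¹ * g * σ) • C ∈ Q) (hA : A ∈ Q) (hB : B ∈ Q) {w x : Fin n}
    (hwA : w ∈ A) (hw : σ w = w) (hxA : x ∈ A) (hxB : σ x ∈ B) : A = B := by
  have hσQ := hQ.smul_eq_of_conj (smul_finset_eq_self_of_forall_smul_mem hσ)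
  have hσA : σ • A = A := hQ.1.eq_of_mem_of_mem (hσQ ▸ smul_mem_smul_finset hA) hA
    (hw ▸ smul_mem_smul_finset hwA) hwA
  exact hQ.1.eq_of_mem_of_mem hA hB (hσA ▸ smul_mem_smul_finset hxA) hxB

theorem smul_eq_of_mem (hQ : IsUniqueFixedPartition n k g Q) (hg : (orderOf g).Prime)
    (hk : 1 < k) (hA : A ∈ Q) : g • A = A := by
  obtain ⟨x, hx⟩ := hQ.1.nonempty_of_mem (by omega) hA
  obtain ⟨w, hwA, hwx⟩ := exists_mem_ne (hQ.1.1 A hA ▸ hk) x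
  by_cases hxw : g.SameCycle x w
  · obtain ⟨i, rfl⟩ := hxw
    have hi : (g ^ i) • A = A := hQ.1.eq_of_mem_of_mem (hQ.zpow_smul_mem i hA) hA
      (smul_mem_smul_finset hx) hwA
    exact Subgroup.mem_of_zpow_mem (H := MulAction.stabilizer _ A) hg hi
      fun h => hwx (by rw [h]; rfl)
  · have hcomm : Commute (g.cycleOf x) g := by
      rcases eq_or_ne (g x) x with h | h
      · rw [(cycleOf_eq_one_iff g).2 h]
        exact Commute.one_left g
      · exact self_mem_cycle_factors_commute
          (cycleOf_mem_cycleFactorsFinset_iff.2 (mem_support.2 h))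
    have hconj : (g.cycleOf x)⁻¹ * g * g.cycleOf x = g := by
      rw [mul_assoc, hcomm.symm.eq, inv_mul_cancel_left]
    refine (hQ.eq_of_conj (fun C hC => by rw [hconj]; exact hQ.smul_mem hC) hA (hQ.smul_mem hA)
      hwA (cycleOf_apply_of_not_sameCycle hxw) hx ?_).symm
    rw [cycleOf_apply_self]
    exact smul_mem_smul_finset hx

theorem eq_of_smul_eq_subsets (hQ : IsUniqueFixedPartition n k g Q)
    (hinv : ∀ C ∈ Q, g • C = C) (hA : A ∈ Q) (hB : B ∈ Q) {S T : Finset (Fin n)}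
    (hSA : S ⊆ A) (hTB : T ⊆ B) (hST : #S = #T) (hS : g • S = S) (hT : g • T = T)
    (hSne : S.Nonempty) {w : Fin n} (hwA : w ∈ A) (hwS : w ∉ S) : A = B := by
  by_contra hAB
  have hdisj : Disjoint A B :=
    disjoint_left.2 fun _ ha hb => hAB (hQ.1.eq_of_mem_of_mem hA hB ha hb)
  obtain ⟨σ, hσinv, hσS, hσT, hσ⟩ := exists_involutive_swap (hdisj.mono hSA hTB) hST
  obtain ⟨x, hx⟩ := hSne
  refine hAB (hQ.eq_of_conj (σ := σ) (fun C hC => ?_) hA hB hwA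
    (hσ w hwS fun hwT => disjoint_left.1 hdisj hwA (hTB hwT)) (hSA hx) (hTB (hσS x hx)))
  suffices (σ * g * σ) • C = C by rwa [hσinv, this]
  refine smul_finset_eq_self_of_forall_smul_mem fun y hy => ?_
  simp only [Perm.smul_def, Perm.mul_apply]
  by_cases hyS : y ∈ S
  · rw [hQ.1.eq_of_mem_of_mem hC hA hy (hSA hyS)]
    exact hSA (hσT _ ((apply_mem_iff_of_smul_finset_eq hT).2 (hσS y hyS)))
  by_cases hyT : y ∈ T
  · rw [hQ.1.eq_of_mem_of_mem hC hB hy (hTB hyT)]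
    exact hTB (hσS _ ((apply_mem_iff_of_smul_finset_eq hS).2 (hσT y hyT)))
  rw [hσ y hyS hyT, hσ (g y) (mt (apply_mem_iff_of_smul_finset_eq hS).1 hyS)
    (mt (apply_mem_iff_of_smul_finset_eq hT).1 hyT)]
  exact (apply_mem_iff_of_smul_finset_eq (hinv C hC)).2 hy

theorem eq_of_apply_eq_self (hQ : IsUniqueFixedPartition n k g Q) (hinv : ∀ C ∈ Q, g • C = C)
    (hk : 1 < k) (hA : A ∈ Q) (hB : B ∈ Q) {x z : Fin n} (hxA : x ∈ A) (hzB : z ∈ B)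
    (hx : g x = x) (hz : g z = z) : A = B := by
  obtain ⟨w, hwA, hwx⟩ := exists_mem_ne (hQ.1.1 A hA ▸ hk) x
  exact hQ.eq_of_smul_eq_subsets hinv hA hB (singleton_subset_iff.2 hxA)
    (singleton_subset_iff.2 hzB) rfl (by simp [hx]) (by simp [hz]) (singleton_nonempty x) hwA
    (by simpa using hwx)

theorem support_cycleOf_eq (hQ : IsUniqueFixedPartition n k g Q) (hg : (orderOf g).Prime)
    (hinv : ∀ C ∈ Q, g • C = C) (hQ2 : 1 < #Q) (hA : A ∈ Q) {x : Fin n} (hxA : x ∈ A)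
    (hx : g x ≠ x) : (g.cycleOf x).support = A := by
  have hSA := support_cycleOf_subset (hinv A hA) hxA
  have hScard := card_support_cycleOf_of_prime hg hx
  by_contra hne
  obtain ⟨w, hwA, hwS⟩ := exists_of_ssubset (ssubset_of_subset_of_ne hSA hne)
  obtain ⟨C, hC, hCA⟩ := exists_mem_ne hQ2 A
  have hcard : orderOf g ≤ #C := by
    rw [hQ.1.1 C hC, ← hQ.1.1 A hA, ← hScard]
    exact card_le_card hSA
  obtain ⟨T, hTC, hT, hTcard⟩ := exists_subset_smul_eq_card_eq hg (hinv C hC) hcard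
  exact hCA (hQ.eq_of_smul_eq_subsets hinv hA hC hSA hTC (hScard.trans hTcard.symm)
    (smul_support_cycleOf g x) hT ⟨x, (mem_support_cycleOf_iff' hx).2 (SameCycle.refl _ _)⟩
    hwA hwS).symm

theorem eq_orderOf (hQ : IsUniqueFixedPartition n k g Q) (hg : (orderOf g).Prime)
    (hinv : ∀ C ∈ Q, g • C = C) (hQ2 : 1 < #Q) : k = orderOf g := by
  obtain ⟨x, hx⟩ : ∃ x, g x ≠ x := by
    by_contra! h
    exact hg.ne_one (orderOf_eq_one_iff.2 (Equiv.ext h))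
  obtain ⟨A, ⟨hA, hxA⟩, -⟩ := hQ.1.2 x
  rw [← hQ.1.1 A hA, ← hQ.support_cycleOf_eq hg hinv hQ2 hA hxA hx,
    card_support_cycleOf_of_prime hg hx]

theorem eq_of_grid (hQ : IsUniqueFixedPartition n k g Q) {p : ℕ}
    {φ : ZMod p × ZMod p → Fin n} (hφ : Injective φ)
    (hgφ : ∀ a j, g (φ (a, j)) = φ (a + 1, j)) {B : ZMod p → Finset (Fin n)}
    (hBQ : ∀ j, B j ∈ Q) (hφB : ∀ a j, φ (a, j) ∈ B j)
    (hBφ : ∀ j, ∀ x ∈ B j, ∃ a, φ (a, j) = x) : B 0 = B 1 := by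
  -- `σ` transposes the grid, so `σ * g * σ` maps each column `B j` onto `B (j + 1)`.
  obtain ⟨σ, hσinv, hσφ, hσ⟩ :=
    exists_involutive_extend hφ (τ := Prod.swap) fun _ => Prod.swap_swap _
  have hg_range : ∀ x ∉ Set.range φ, g x ∉ Set.range φ := by
    rintro x hx ⟨⟨a, j⟩, h⟩
    exact hx ⟨(a - 1, j), g.injective (by rw [hgφ, sub_add_cancel, h])⟩
  refine hQ.eq_of_conj (fun C hC => ?_) (hBQ 0) (hBQ 1) (hφB 0 0) (hσφ (0, 0)) (hφB 1 0)
    (by rw [hσφ]; exact hφB 0 1)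
  rw [hσinv]
  by_cases hCB : ∃ j, C = B j
  · obtain ⟨j, rfl⟩ := hCB
    have hsub : (σ * g * σ) • B j ⊆ B (j + 1) := by
      intro y hy
      obtain ⟨x, hx, rfl⟩ := mem_smul_finset.1 hy
      obtain ⟨a, rfl⟩ := hBφ j x hx
      simp only [Perm.smul_def, Perm.mul_apply, hσφ, Prod.swap_prod_mk, hgφ]
      exact hφB a (j + 1)
    rw [eq_of_subset_of_card_le hsub
      (by rw [card_smul_finset, hQ.1.1 _ (hBQ j), hQ.1.1 _ (hBQ _)])]
    exact hBQ (j + 1)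
  · have hCφ : ∀ x ∈ C, x ∉ Set.range φ := by
      rintro x hx ⟨⟨a, j⟩, rfl⟩
      exact hCB ⟨j, hQ.1.eq_of_mem_of_mem hC (hBQ j) hx (hφB a j)⟩
    have : (σ * g * σ) • C = g • C := image_congr fun x hx => by
      simp only [Perm.smul_def, Perm.mul_apply, hσ x (hCφ x hx), hσ _ (hg_range x (hCφ x hx))]
    rw [this]
    exact hQ.smul_mem hC

theorem card_lt_orderOf (hQ : IsUniqueFixedPartition n k g Q) (hg : (orderOf g).Prime)
    {s : Finset (Finset (Fin n))} (hsQ : s ⊆ Q)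
    (hs : ∀ A ∈ s, ∃ x ∈ A, (g.cycleOf x).support = A) : #s < orderOf g := by
  set p := orderOf g
  have := Fact.mk hg
  by_contra! hps
  obtain ⟨e⟩ :=
    Function.Embedding.nonempty_of_card_le (α := ZMod p) (β := s) (by simpa using hps)
  choose y hyB hyS using fun j => hs _ (e j).2
  have hy : ∀ j, y j ∈ (g.cycleOf (y j)).support := fun j => (hyS j).symm ▸ hyB j
  have hpow : ∀ j (l m : ℕ), (g ^ l) (y j) = (g ^ m) (y j) ↔ (l : ZMod p) = m := fun j l m => by
    rw [(isCycleOn_support_cycleOf g (y j)).pow_apply_eq_pow_apply (hy j),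
      card_support_cycleOf_of_prime hg (mem_support.1 (support_cycleOf_le g _ (hy j))),
      ZMod.natCast_eq_natCast_iff]
  let φ : ZMod p × ZMod p → Fin n := fun q => (g ^ q.1.val) (y q.2)
  have hφB : ∀ a j, φ (a, j) ∈ (e j : Finset (Fin n)) := fun a j => by
    rw [← hyS j]
    exact (isCycleOn_support_cycleOf g (y j)).1.mapsTo.perm_pow _ (hy j)
  have hφ : Injective φ := by
    rintro ⟨a, j⟩ ⟨b, i⟩ h
    obtain rfl : j = i := e.injective (Subtype.ext
      (hQ.1.eq_of_mem_of_mem (hsQ (e j).2) (hsQ (e i).2) (hφB a j) (h ▸ hφB b i)))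
    simpa using (hpow j _ _).1 h
  have hgφ : ∀ a j, g (φ (a, j)) = φ (a + 1, j) := fun a j => by
    rw [← Perm.mul_apply, ← pow_succ']
    exact (hpow j _ _).2 (by simp)
  have hBφ : ∀ j, ∀ x ∈ (e j : Finset (Fin n)), ∃ a, φ (a, j) = x := fun j x hx => by
    rw [← hyS j] at hx
    obtain ⟨l, -, rfl⟩ := (mem_support_cycleOf_iff.1 hx).1.exists_pow_eq'
    exact ⟨l, (hpow j _ _).2 (by simp)⟩
  exact zero_ne_one (e.injective (Subtype.ext
    (hQ.eq_of_grid hφ hgφ (fun j => hsQ (e j).2) hφB hBφ)))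

theorem filter_apply_eq_self_eq (hQ : IsUniqueFixedPartition n k g Q) (hg : (orderOf g).Prime)
    (hinv : ∀ C ∈ Q, g • C = C) (hQ2 : 1 < #Q) (hk : 1 < k) (hA : A ∈ Q) {a : Fin n}
    (haA : a ∈ A) (ha : g a = a) : univ.filter (fun x => g x = x) = A := by
  ext x
  simp only [mem_filter, mem_univ, true_and]
  refine ⟨fun hx => ?_, fun hxA => ?_⟩
  · obtain ⟨B, ⟨hB, hxB⟩, -⟩ := hQ.1.2 x
    rwa [hQ.eq_of_apply_eq_self hinv hk hB hA hxB haA hx ha] at hxB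
  · by_contra hx
    rw [← hQ.support_cycleOf_eq hg hinv hQ2 hA hxA hx] at haA
    exact mem_support.1 (support_cycleOf_le g x haA) ha

theorem card_fixedPoints_cases (hQ : IsUniqueFixedPartition n k g Q) (hg : (orderOf g).Prime)
    (hinv : ∀ C ∈ Q, g • C = C) (hQ2 : 1 < #Q) (hk : 1 < k) :
    (#(univ.filter fun x => g x = x) = orderOf g ∧ #Q - 1 < orderOf g) ∨
      (#(univ.filter fun x => g x = x) = 0 ∧ #Q < orderOf g) := by
  have hmoved : ∀ A ∈ Q, ∀ x ∈ A, g x ≠ x → ∃ x ∈ A, (g.cycleOf x).support = A :=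
    fun A hA x hxA hx => ⟨x, hxA, hQ.support_cycleOf_eq hg hinv hQ2 hA hxA hx⟩
  by_cases hF : ∃ a, g a = a
  · obtain ⟨a, ha⟩ := hF
    obtain ⟨A, ⟨hA, haA⟩, -⟩ := hQ.1.2 a
    refine .inl ⟨?_, ?_⟩
    · rw [hQ.filter_apply_eq_self_eq hg hinv hQ2 hk hA haA ha, hQ.1.1 A hA,
        hQ.eq_orderOf hg hinv hQ2]
    · rw [← card_erase_of_mem hA]
      refine hQ.card_lt_orderOf hg (erase_subset A Q) fun B hB => ?_
      obtain ⟨hBA, hB⟩ := mem_erase.1 hB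
      obtain ⟨x, hxB⟩ := hQ.1.nonempty_of_mem (by omega) hB
      exact hmoved B hB x hxB fun hx => hBA (hQ.eq_of_apply_eq_self hinv hk hB hA hxB haA hx ha)
  · push Not at hF
    refine .inr ⟨by simp [hF], hQ.card_lt_orderOf hg subset_rfl fun B hB => ?_⟩
    obtain ⟨x, hxB⟩ := hQ.1.nonempty_of_mem (by omega) hB
    exact hmoved B hB x hxB (hF x)

end IsUniqueFixedPartition

theorem stmt17_general {n k m : ℕ} (hn : 4 < n) (hk1 : 1 < k) (hk2 : 2 * k ≤ n)
    (hm : m = n / k) {p : ℕ} (hp : p.Prime)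
    (g : Equiv.Perm (Fin n)) (hord : orderOf g = p)
    (Q : Finset (Finset (Fin n))) (hQ : IsSizedPartition n k Q)
    (hfix : ∀ P : Finset (Finset (Fin n)), IsSizedPartition n k P →
      (P.image (fun A => A.image ⇑g) = P ↔ P = Q)) :
    Odd p ∧ k = p ∧ m ≤ p ∧ g ∈ alternatingGroup (Fin n) ∧
    (∀ A ∈ Q, A.image ⇑g = A) ∧
    (((Finset.univ.filter fun a => g a = a).card = p ∧
        g.cycleType = Multiset.replicate (m - 1) p) ∨
      (m < p ∧ (Finset.univ.filter fun a => g a = a).card = 0 ∧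
        g.cycleType = Multiset.replicate m p)) := by
  subst hord
  have hQ' : IsUniqueFixedPartition n k g Q := ⟨hQ, hfix⟩
  have hQ2 : 1 < #Q := hQ.one_lt_card (by omega) hk2
  have hinv : ∀ A ∈ Q, g • A = A := fun A hA => hQ'.smul_eq_of_mem hp hk1 hA
  have hkp : k = orderOf g := hQ'.eq_orderOf hp hinv hQ2
  have hQm : #Q = m := hm ▸ (Nat.div_eq_of_eq_mul_left (by omega) hQ.card_mul_eq.symm).symm
  have hnm : n = m * orderOf g := hQm ▸ hkp ▸ hQ.card_mul_eq.symm
  rcases hQ'.card_fixedPoints_cases hp hinv hQ2 hk1 with ⟨hF, hlt⟩ | ⟨hF, hlt⟩ <;>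
    rw [hQm] at hlt
  · have hodd : Odd (orderOf g) := hp.odd_of_ne_two fun h2 => by rw [h2] at hlt hnm; omega
    refine ⟨hodd, hkp, by omega, mem_alternatingGroup_of_odd_orderOf hodd, hinv,
      .inl ⟨hF, cycleType_eq_replicate_of_card_fixedPoints hp ?_⟩⟩
    have := Nat.le_mul_of_pos_left (orderOf g) (show 0 < m by omega)
    rw [hF, Fintype.card_fin, Nat.sub_one_mul]
    omega
  · have hodd : Odd (orderOf g) := hp.odd_of_ne_two fun h2 => by
      rw [h2] at hlt; rw [hQm] at hQ2; omega
    refine ⟨hodd, hkp, hlt.le, mem_alternatingGroup_of_odd_orderOf hodd, hinv,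
      .inr ⟨hlt, hF, cycleType_eq_replicate_of_card_fixedPoints hp ?_⟩⟩
    rw [hF, Fintype.card_fin]
    omega

theorem stmt17 {n k m : ℕ} (hn : 4 < n) (hk1 : 1 < k) (hk2 : 2 * k ≤ n)
    (hkn : k ∣ n) (hm : m = n / k) {p : ℕ} (hp : p.Prime)
    (g : Equiv.Perm (Fin n)) (hord : orderOf g = p)
    (Q : Finset (Finset (Fin n))) (hQ : IsSizedPartition n k Q)
    (hfix : ∀ P : Finset (Finset (Fin n)), IsSizedPartition n k P →
      (P.image (fun A => A.image ⇑g) = P ↔ P = Q))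
    (hsemi : ∀ (j : ℤ) (P : Finset (Finset (Fin n))), IsSizedPartition n k P → P ≠ Q →
      P.image (fun A => A.image ⇑(g ^ j)) = P →
      ∀ R : Finset (Finset (Fin n)), IsSizedPartition n k R →
        R.image (fun A => A.image ⇑(g ^ j)) = R) :
    Odd p ∧ k = p ∧ m ≤ p ∧ g ∈ alternatingGroup (Fin n) ∧
    (∀ A ∈ Q, A.image ⇑g = A) ∧
    (((Finset.univ.filter fun a => g a = a).card = p ∧
        g.cycleType = Multiset.replicate (m - 1) p) ∨
      (m < p ∧ (Finset.univ.filter fun a => g a = a).card = 0 ∧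
        g.cycleType = Multiset.replicate m p)) :=
  stmt17_general hn hk1 hk2 hm hp g hord Q hQ hfix
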